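/- Let x, y, z ∈ ℂ and let α, β : ℕ → ℂ with α 0 = β 0. Let B be the n×n weighted recurrence matrix with parameters (x,y,z), first column α and first row β. Let v, w ∈ ℂ and let A be the n×n matrix with A_{i,j} = C(i,j) v^j w^{i-j}. Then B·Aᵗ is the weighted recurrence matrix with parameters (vx + w, vy - wz, z), first column α, and first row η with η_j = Σ_{k=0}^{j} C(j,k) v^k w^{j-k} β_k. -/
import Mathlib

open Matrix Finset

-- Pascal decomposition: D i (m+1) = w * D i m + v * E i (m+1)
lemma aux1 (v w : ℂ) (B : ℕ → ℕ → ℂ) (i m : ℕ) :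
    ∑ k ∈ range (m+2), (Nat.choose (m+1) k : ℂ) * v^k * w^(m+1-k) * B i k
    = w * ∑ k ∈ range (m+1), (Nat.choose m k : ℂ) * v^k * w^(m-k) * B i k
      + v * ∑ k ∈ range (m+1), (Nat.choose m k : ℂ) * v^k * w^(m-k) * B i (k+1) := by
  rw [Finset.sum_range_succ' _ (m+1)]
  have h : ∀ l ∈ range (m+1), ((m+1).choose (l+1) : ℂ) * v^(l+1) * w^(m+1-(l+1)) * B i (l+1)
      = (m.choose l : ℂ) * v^(l+1) * w^(m-l) * B i (l+1)
        + (m.choose (l+1) : ℂ) * v^(l+1) * w^(m-l) * B i (l+1) := by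
    intro l hl
    rw [Nat.choose_succ_succ, Nat.succ_sub_succ]
    push_cast
    ring
  rw [Finset.sum_congr rfl h, Finset.sum_add_distrib]
  rw [Finset.sum_range_succ (fun l => (m.choose (l+1) : ℂ) * v^(l+1) * w^(m-l) * B i (l+1)) m]
  rw [Nat.choose_succ_self]
  rw [Finset.sum_range_succ' (fun k => (m.choose k : ℂ) * v^k * w^(m-k) * B i k) m]
  have h2 : ∀ l ∈ range m, (m.choose (l+1) : ℂ) * v^(l+1) * w^(m-l) * B i (l+1)
      = w * ((m.choose (l+1) : ℂ) * v^(l+1) * w^(m-(l+1)) * B i (l+1)) := by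
    intro l hl
    rw [Finset.mem_range] at hl
    have : m - l = (m - (l+1)) + 1 := by omega
    rw [this]
    ring
  have h3 : ∀ l ∈ range (m+1), (m.choose l : ℂ) * v^(l+1) * w^(m-l) * B i (l+1)
      = v * ((m.choose l : ℂ) * v^l * w^(m-l) * B i (l+1)) := by
    intro l hl; ring
  rw [Finset.sum_congr rfl h2, Finset.sum_congr rfl h3, ← Finset.mul_sum, ← Finset.mul_sum]
  simp
  ring

theorem stmt_4 (n : ℕ) (x y z v w : ℂ) (α β : ℕ → ℂ) (hαβ : α 0 = β 0)
    (B : ℕ → ℕ → ℂ)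
    (hcol : ∀ i, B i 0 = α i) (hrow : ∀ j, B 0 j = β j)
    (hrec : ∀ i j, 1 ≤ i → 1 ≤ j →
      B i j = x * B i (j - 1) + y * B (i - 1) (j - 1) + z * B (i - 1) j) :
    let A : Matrix (Fin n) (Fin n) ℂ :=
      Matrix.of fun i j : Fin n => (Nat.choose i j : ℂ) * v ^ (j : ℕ) * w ^ ((i : ℕ) - (j : ℕ))
    let C : Matrix (Fin n) (Fin n) ℂ := (Matrix.of fun i j : Fin n => B i j) * Aᵀ
    (∀ (i : ℕ) (hi : i < n) (h0 : 0 < n), C ⟨i, hi⟩ ⟨0, h0⟩ = α i) ∧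
    (∀ (j : ℕ) (hj : j < n) (h0 : 0 < n),
        C ⟨0, h0⟩ ⟨j, hj⟩ =
          ∑ k ∈ Finset.range (j + 1), (Nat.choose j k : ℂ) * v ^ k * w ^ (j - k) * β k) ∧
    (∀ (i j : ℕ) (hi : i < n) (hj : j < n), 1 ≤ i → 1 ≤ j →
        C ⟨i, hi⟩ ⟨j, hj⟩ =
          (v * x + w) * C ⟨i, hi⟩ ⟨j - 1, by omega⟩ +
            (v * y - w * z) * C ⟨i - 1, by omega⟩ ⟨j - 1, by omega⟩ +
            z * C ⟨i - 1, by omega⟩ ⟨j, hj⟩) := by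
  intro A C
  set D : ℕ → ℕ → ℂ := fun i j => ∑ k ∈ range (j+1), (Nat.choose j k : ℂ) * v^k * w^(j-k) * B i k
    with hD
  set E : ℕ → ℕ → ℂ := fun i j => ∑ k ∈ range j, (Nat.choose (j-1) k : ℂ) * v^k * w^(j-1-k) * B i (k+1)
    with hE
  -- matrix entries equal D
  have hCD : ∀ (i j : ℕ) (hi : i < n) (hj : j < n), C ⟨i, hi⟩ ⟨j, hj⟩ = D i j := by
    intro i j hi hj
    have h1 : C ⟨i, hi⟩ ⟨j, hj⟩
        = ∑ k : Fin n, B i k * ((Nat.choose j (k:ℕ) : ℂ) * v^(k:ℕ) * w^(j-(k:ℕ))) := by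
      simp [C, A, Matrix.mul_apply, Matrix.transpose_apply]
    rw [h1, Fin.sum_univ_eq_sum_range (fun k => B i k * ((Nat.choose j k : ℂ) * v^k * w^(j-k))) n]
    rw [hD]
    rw [← Finset.sum_subset (Finset.range_subset_range.2 hj)]
    · exact Finset.sum_congr rfl (fun k hk => by ring)
    · intro k hk hk2
      rw [Finset.mem_range] at hk hk2
      rw [Nat.choose_eq_zero_of_lt (by omega)]
      simp
  refine ⟨?_, ?_, ?_⟩
  · intro i hi h0
    rw [hCD i 0 hi h0, hD]
    simp [hcol]
  · intro j hj h0
    rw [hCD 0 j h0 hj, hD]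
    exact Finset.sum_congr rfl fun k hk => by rw [hrow]
  · intro i j hi hj hi1 hj1
    obtain ⟨a, rfl⟩ : ∃ a, i = a + 1 := ⟨i - 1, by omega⟩
    obtain ⟨m, rfl⟩ : ∃ m, j = m + 1 := ⟨j - 1, by omega⟩
    rw [hCD, hCD, hCD, hCD]
    simp only [Nat.add_sub_cancel]
    have key1 : ∀ i', D i' (m+1) = w * D i' m + v * E i' (m+1) := by
      intro i'
      rw [hD, hE]
      simpa using aux1 v w B i' m
    have key2 : E (a+1) (m+1) = x * D (a+1) m + y * D a m + z * E a (m+1) := by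
      simp only [hD, hE]
      simp only [Nat.add_sub_cancel]
      rw [Finset.mul_sum, Finset.mul_sum, Finset.mul_sum, ← Finset.sum_add_distrib,
        ← Finset.sum_add_distrib]
      refine Finset.sum_congr rfl fun k hk => ?_
      rw [hrec (a+1) (k+1) (by omega) (by omega)]
      simp only [Nat.add_sub_cancel]
      ring
    have e1 := key1 (a+1)
    have e2 := key1 a
    linear_combination e1 + v * key2 - z * e2
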